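/- arXiv:2505.00282 — 2 statements merged into one kernel-verified Lean document; each statement's English description precedes it below -/
import Mathlib

section
/- Let M* be a random variable, A ∈ {0,1} an annotation indicator, and X, U random variables with (U, M*) ⊥ A | X and consistency M = A·M*. If P(A=1|X=x) > 0 almost surely and E|M*| < ∞, then E[M*] = E[E[M | A=1, X, U]]. -/
/-!
Let `s = {A = 1}`, `𝒢 = σ(X, U)` and `g = E[M* | 𝒢]`. Conditional independence of `(U, M*)` and
`A` given `X` says `P(s | X, U, M*) = P(s | X)`; by the tower property the same holds with `𝒢`
on the left, and pulling `M*` out of `E[1_s M* | X, U, M*]` gives `E[1_s M* | 𝒢] = P(s | 𝒢) · g`.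
This identity says that `g` is a version of `E[M | 𝒢]` under `P(· | s)`. Such a version is
pinned down only on `s`, but positivity of `P(s | 𝒢)` makes every `P(· | s)`-null set of `𝒢`
`P`-null, so `g` agrees `P`-a.s. with the inner conditional expectation, and `E[M*] = E[g]`.
-/

open MeasureTheory ProbabilityTheory

theorem Set.indicator_one_mul {α M : Type*} [MulZeroOneClass M] (s : Set α) (f : α → M) :
    s.indicator (fun _ => (1 : M)) * f = s.indicator f := by
  ext a; by_cases ha : a ∈ s <;> simp [ha]

section

variable {Ω : Type*} {m m₁ m₂ m₃ mΩ : MeasurableSpace Ω} {μ : Measure Ω}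

theorem setIntegral_eq_of_isPiSystem {E : Type*} [NormedAddCommGroup E] [NormedSpace ℝ E]
    [CompleteSpace E] (hm : m ≤ mΩ) {S : Set (Set Ω)}
    (h_gen : m = MeasurableSpace.generateFrom S) (h_pi : IsPiSystem S)
    {f g : Ω → E} (hf : Integrable f μ) (hg : Integrable g μ)
    (h_univ : ∫ ω, f ω ∂μ = ∫ ω, g ω ∂μ)
    (h_basic : ∀ t ∈ S, ∫ ω in t, f ω ∂μ = ∫ ω in t, g ω ∂μ)
    {t : Set Ω} (ht : MeasurableSet[m] t) : ∫ ω in t, f ω ∂μ = ∫ ω in t, g ω ∂μ := by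
  induction t, ht using MeasurableSpace.induction_on_inter h_gen h_pi with
  | empty => simp
  | basic t ht => exact h_basic t ht
  | compl t ht ih =>
    rw [setIntegral_compl (hm t ht) hf, setIntegral_compl (hm t ht) hg, ih, h_univ]
  | iUnion u hdisj hu ih =>
    rw [integral_iUnion (fun i => hm _ (hu i)) hdisj hf.integrableOn,
      integral_iUnion (fun i => hm _ (hu i)) hdisj hg.integrableOn]
    exact tsum_congr ih

variable [IsFiniteMeasure μ]

theorem setIntegral_inter_condExp_indicator_of_condExp_inter_eq_mul (hm : m ≤ mΩ)
    {a b s : Set Ω} (ha : MeasurableSet[m] a) (hb : MeasurableSet b) (hs : MeasurableSet s)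
    (h : μ⟦b ∩ s | m⟧ =ᵐ[μ] μ⟦b | m⟧ * μ⟦s | m⟧) :
    ∫ ω in a ∩ b, (μ⟦s | m⟧) ω ∂μ = ∫ ω in a ∩ b, s.indicator (fun _ => (1 : ℝ)) ω ∂μ := by
  have h_int : Integrable (b.indicator (fun _ => (1 : ℝ)) * μ⟦s | m⟧) μ := by
    rw [Set.indicator_one_mul]; exact integrable_condExp.indicator hb
  have h_pull := condExp_mul_of_stronglyMeasurable_right stronglyMeasurable_condExp h_int
    ((integrable_const 1).indicator hb)
  calc ∫ ω in a ∩ b, (μ⟦s | m⟧) ω ∂μ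
      = ∫ ω in a, μ[b.indicator (fun _ => (1 : ℝ)) * μ⟦s | m⟧ | m] ω ∂μ := by
        rw [setIntegral_condExp hm h_int ha, Set.indicator_one_mul, setIntegral_indicator hb]
    _ = ∫ ω in a, (μ⟦b ∩ s | m⟧) ω ∂μ := by
        refine integral_congr_ae (ae_restrict_of_ae ?_)
        filter_upwards [h_pull, h] with ω h₁ h₂
        rw [h₁, h₂]
    _ = ∫ ω in a ∩ b, s.indicator (fun _ => (1 : ℝ)) ω ∂μ := by
        rw [setIntegral_condExp hm ((integrable_const 1).indicator (hb.inter hs)) ha,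
          ← Set.indicator_indicator, setIntegral_indicator hb]

theorem condExp_indicator_comap_prodMk_ae_eq_of_condIndepFun [StandardBorelSpace Ω]
    {𝒳 𝒱 𝒴 : Type*} [MeasurableSpace 𝒳] [MeasurableSpace 𝒱] [MeasurableSpace 𝒴]
    {X : Ω → 𝒳} {V : Ω → 𝒱} {Y : Ω → 𝒴} (hX : Measurable X) (hV : Measurable V)
    (hY : Measurable Y) (h : CondIndepFun (MeasurableSpace.comap X inferInstance) hX.comap_le V Y μ)
    {B : Set 𝒴} (hB : MeasurableSet B) :
    μ⟦Y ⁻¹' B | MeasurableSpace.comap (fun ω => (X ω, V ω)) inferInstance⟧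
      =ᵐ[μ] μ⟦Y ⁻¹' B | MeasurableSpace.comap X inferInstance⟧ := by
  have hs : MeasurableSet (Y ⁻¹' B) := hY hB
  have hXV : MeasurableSpace.comap X inferInstance
      ≤ MeasurableSpace.comap (fun ω => (X ω, V ω)) inferInstance :=
    (measurable_fst.comp (comap_measurable (fun ω => (X ω, V ω)))).comap_le
  refine (ae_eq_condExp_of_forall_setIntegral_eq (hX.prodMk hV).comap_le
    ((integrable_const 1).indicator hs) (fun _ _ _ => integrable_condExp.integrableOn)
    (fun t ht _ => ?_) (stronglyMeasurable_condExp.mono hXV).aestronglyMeasurable).symm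
  refine setIntegral_eq_of_isPiSystem (hX.prodMk hV).comap_le
    (by rw [← generateFrom_prod, MeasurableSpace.comap_generateFrom]; rfl)
    (isPiSystem_prod.comap (fun ω => (X ω, V ω)))
    integrable_condExp ((integrable_const 1).indicator hs) (integral_condExp hX.comap_le) ?_ ht
  rintro _ ⟨_, ⟨B', hB', C, hC, rfl⟩, rfl⟩
  rw [Set.mk_preimage_prod]
  exact setIntegral_inter_condExp_indicator_of_condExp_inter_eq_mul hX.comap_le
    ⟨B', hB', rfl⟩ (hV hC) hs
    ((condIndepFun_iff_condExp_inter_preimage_eq_mul hV hY).mp h C B hC hB)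

theorem condExp_ae_eq_of_le_of_condExp_ae_eq (h₁₂ : m₁ ≤ m₂) (h₂₃ : m₂ ≤ m₃) (h₃ : m₃ ≤ mΩ)
    {f : Ω → ℝ} (h : μ[f | m₃] =ᵐ[μ] μ[f | m₁]) : μ[f | m₂] =ᵐ[μ] μ[f | m₁] :=
  calc μ[f | m₂] =ᵐ[μ] μ[μ[f | m₃] | m₂] := (condExp_condExp_of_le h₂₃ h₃).symm
    _ =ᵐ[μ] μ[μ[f | m₁] | m₂] := condExp_congr_ae h
    _ = μ[f | m₁] := condExp_of_stronglyMeasurable (h₂₃.trans h₃)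
        (stronglyMeasurable_condExp.mono h₁₂) integrable_condExp

theorem condExp_indicator_ae_eq_mul_of_condExp_ae_eq (h₁₂ : m₁ ≤ m₂) (h₂₃ : m₂ ≤ m₃)
    (h₃ : m₃ ≤ mΩ) {s : Set Ω} (hs : MeasurableSet s) {f : Ω → ℝ}
    (hf : StronglyMeasurable[m₃] f) (hfi : Integrable f μ) (h : μ⟦s | m₃⟧ =ᵐ[μ] μ⟦s | m₁⟧) :
    μ[s.indicator f | m₂] =ᵐ[μ] μ⟦s | m₂⟧ * μ[f | m₂] := by
  have h_eq : μ[s.indicator f | m₃] =ᵐ[μ] μ⟦s | m₁⟧ * f := by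
    rw [← Set.indicator_one_mul]
    filter_upwards [condExp_mul_of_stronglyMeasurable_right hf
      (by rw [Set.indicator_one_mul]; exact hfi.indicator hs)
      ((integrable_const 1).indicator hs), h] with ω h_pull hω
    rw [h_pull, Pi.mul_apply, hω, Pi.mul_apply]
  calc μ[s.indicator f | m₂] =ᵐ[μ] μ[μ[s.indicator f | m₃] | m₂] :=
        (condExp_condExp_of_le h₂₃ h₃).symm
    _ =ᵐ[μ] μ[μ⟦s | m₁⟧ * f | m₂] := condExp_congr_ae h_eq
    _ =ᵐ[μ] μ⟦s | m₁⟧ * μ[f | m₂] :=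
        condExp_mul_of_stronglyMeasurable_left (stronglyMeasurable_condExp.mono h₁₂)
          (integrable_condExp.congr h_eq) hfi
    _ =ᵐ[μ] μ⟦s | m₂⟧ * μ[f | m₂] := by
        filter_upwards [condExp_ae_eq_of_le_of_condExp_ae_eq h₁₂ h₂₃ h₃ h] with ω hω
        rw [Pi.mul_apply, Pi.mul_apply, hω]

theorem ae_eq_condExp_cond_of_condExp_indicator_ae_eq (hm : m ≤ mΩ) {s : Set Ω}
    (hs : MeasurableSet s) {f g : Ω → ℝ} (hf : Integrable f μ) (hg : StronglyMeasurable[m] g)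
    (hgi : Integrable g μ) (h : μ[s.indicator f | m] =ᵐ[μ] μ⟦s | m⟧ * g) :
    g =ᵐ[μ[|s]] (μ[|s])[f | m] := by
  rcases eq_or_ne (μ s) 0 with hμs | hμs
  · simp [cond_eq_zero_of_meas_eq_zero hμs, Filter.EventuallyEq]
  have h_int : ∀ {φ : Ω → ℝ}, Integrable φ μ → Integrable φ μ[|s] := fun hφ =>
    hφ.restrict.smul_measure (ENNReal.inv_ne_top.2 hμs)
  have h_setIntegral : ∀ (φ : Ω → ℝ) {t : Set Ω}, MeasurableSet t →
      ∫ ω in t, φ ω ∂μ[|s] = (μ s)⁻¹.toReal * ∫ ω in t, s.indicator φ ω ∂μ := by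
    intro φ t ht
    rw [ProbabilityTheory.cond, Measure.restrict_smul, integral_smul_measure,
      Measure.restrict_restrict ht, setIntegral_indicator hs, smul_eq_mul]
  have h_pull : μ[s.indicator g | m] =ᵐ[μ] μ⟦s | m⟧ * g := by
    rw [← Set.indicator_one_mul]
    exact condExp_mul_of_stronglyMeasurable_right hg
      (by rw [Set.indicator_one_mul]; exact hgi.indicator hs) ((integrable_const 1).indicator hs)
  refine ae_eq_condExp_of_forall_setIntegral_eq hm (h_int hf)
    (fun _ _ _ => (h_int hgi).integrableOn) (fun t ht _ => ?_) hg.aestronglyMeasurable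
  rw [h_setIntegral _ (hm t ht), h_setIntegral _ (hm t ht),
    ← setIntegral_condExp hm (hgi.indicator hs) ht, ← setIntegral_condExp hm (hf.indicator hs) ht]
  congr 1
  exact setIntegral_congr_ae (hm t ht) ((h_pull.trans h.symm).mono fun ω hω _ => hω)

theorem measure_eq_zero_of_measure_inter_eq_zero_of_condExp_pos (hm : m ≤ mΩ) {s t : Set Ω}
    (hs : MeasurableSet s) (ht : MeasurableSet[m] t) (hst : μ (s ∩ t) = 0)
    (hpos : ∀ᵐ ω ∂μ, 0 < (μ⟦s | m⟧) ω) : μ t = 0 := by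
  have h_zero : ∫ ω in t, (μ⟦s | m⟧) ω ∂μ = 0 := by
    rw [setIntegral_condExp hm ((integrable_const 1).indicator hs) ht, setIntegral_indicator hs,
      setIntegral_const, measureReal_def, Set.inter_comm, hst, ENNReal.toReal_zero, zero_smul]
  have h_ae_zero : μ⟦s | m⟧ =ᵐ[μ.restrict t] 0 :=
    (setIntegral_eq_zero_iff_of_nonneg_ae (ae_restrict_of_ae (hpos.mono fun _ h => h.le))
      integrable_condExp.integrableOn).mp h_zero
  have h_false : ∀ᵐ ω ∂μ.restrict t, False := by
    filter_upwards [h_ae_zero, ae_restrict_of_ae hpos] with ω h₀ h₁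
    exact h₁.ne' h₀
  exact Measure.restrict_eq_zero.mp (ae_eq_bot.mp (Filter.eventually_false_iff_eq_bot.mp h_false))

theorem ae_eq_of_ae_cond_eq_of_condExp_pos (hm : m ≤ mΩ) {s : Set Ω} (hs : MeasurableSet s)
    {g₁ g₂ : Ω → ℝ} (h₁ : StronglyMeasurable[m] g₁) (h₂ : StronglyMeasurable[m] g₂)
    (hpos : ∀ᵐ ω ∂μ, 0 < (μ⟦s | m⟧) ω) (h : g₁ =ᵐ[μ[|s]] g₂) : g₁ =ᵐ[μ] g₂ := by
  have hD : MeasurableSet[m] {ω | g₁ ω ≠ g₂ ω} := (h₁.measurableSet_eq_fun h₂).compl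
  rw [Filter.EventuallyEq, ae_iff, cond_apply' (hm _ hD), mul_eq_zero, ENNReal.inv_eq_zero] at h
  exact ae_iff.2 (measure_eq_zero_of_measure_inter_eq_zero_of_condExp_pos hm hs hD
    (h.resolve_left (measure_ne_top μ s)) hpos)

theorem integral_eq_integral_condExp_cond_indicator (h₁₂ : m₁ ≤ m₂) (h₂₃ : m₂ ≤ m₃)
    (h₃ : m₃ ≤ mΩ) {s : Set Ω} (hs : MeasurableSet s) {f : Ω → ℝ}
    (hf : StronglyMeasurable[m₃] f) (hfi : Integrable f μ) (h : μ⟦s | m₃⟧ =ᵐ[μ] μ⟦s | m₁⟧)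
    (hpos : ∀ᵐ ω ∂μ, 0 < (μ⟦s | m₁⟧) ω) :
    ∫ ω, f ω ∂μ = ∫ ω, (μ[|s])[s.indicator f | m₂] ω ∂μ := by
  have h_pos₂ : ∀ᵐ ω ∂μ, 0 < (μ⟦s | m₂⟧) ω := by
    filter_upwards [hpos, condExp_ae_eq_of_le_of_condExp_ae_eq h₁₂ h₂₃ h₃ h] with ω h₁ h₂
    rwa [h₂]
  have h_version : μ[f | m₂] =ᵐ[μ[|s]] (μ[|s])[s.indicator f | m₂] := by
    refine ae_eq_condExp_cond_of_condExp_indicator_ae_eq (h₂₃.trans h₃) hs (hfi.indicator hs)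
      stronglyMeasurable_condExp integrable_condExp ?_
    rw [Set.indicator_indicator, Set.inter_self]
    exact condExp_indicator_ae_eq_mul_of_condExp_ae_eq h₁₂ h₂₃ h₃ hs hf hfi h
  calc ∫ ω, f ω ∂μ = ∫ ω, μ[f | m₂] ω ∂μ := (integral_condExp (h₂₃.trans h₃)).symm
    _ = ∫ ω, (μ[|s])[s.indicator f | m₂] ω ∂μ :=
      integral_congr_ae (ae_eq_of_ae_cond_eq_of_condExp_pos (h₂₃.trans h₃) hs
        stronglyMeasurable_condExp stronglyMeasurable_condExp h_pos₂ h_version)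

end

/-- Under consistency `M = A·M*`, missing at random `(U, M*) ⊥ A | X`,
and positivity `P(A=1|X) > 0` a.s., with `E|M*| < ∞`, we have
`E[M*] = E[E[M | A=1, X, U]]`, where the inner conditional expectation is the
conditional expectation of `M` given `(X, U)` under the measure conditioned on `A = 1`. -/
theorem stmt0 {Ω 𝒳 𝒰 : Type*} [MeasurableSpace Ω] [StandardBorelSpace Ω]
    [MeasurableSpace 𝒳] [MeasurableSpace 𝒰]
    (P : Measure Ω) [IsProbabilityMeasure P]
    (Mstar M A : Ω → ℝ) (X : Ω → 𝒳) (U : Ω → 𝒰)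
    (hMstar : Measurable Mstar) (hAmeas : Measurable A)
    (hX : Measurable X) (hU : Measurable U)
    (hbin : ∀ ω, A ω = 0 ∨ A ω = 1)
    (hcons : ∀ ω, M ω = A ω * Mstar ω)
    (hMAR : CondIndepFun (MeasurableSpace.comap X inferInstance) (hX.comap_le)
      (fun ω => (U ω, Mstar ω)) A P)
    (hpos : ∀ᵐ ω ∂P, 0 < (P[A | MeasurableSpace.comap X inferInstance]) ω)
    (hint : Integrable Mstar P) :
    ∫ ω, Mstar ω ∂P
      = ∫ ω, (MeasureTheory.condExp
          (MeasurableSpace.comap (fun ω' => (X ω', U ω')) inferInstance)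
          (P[|{ω' | A ω' = 1}]) M) ω ∂P := by
  set s : Set Ω := {ω' | A ω' = 1}
  have hs : MeasurableSet s := hAmeas (measurableSet_singleton 1)
  have hA : A = s.indicator (fun _ => 1) := by
    ext ω; rcases hbin ω with h | h <;> simp [s, h]
  have hM : M = s.indicator Mstar := by
    ext ω; rcases hbin ω with h | h <;> simp [s, h, hcons]
  have h_le₁ : MeasurableSpace.comap X inferInstance
      ≤ MeasurableSpace.comap (fun ω => (X ω, U ω)) inferInstance :=
    (measurable_fst.comp (comap_measurable (fun ω => (X ω, U ω)))).comap_le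
  have h_le₂ : MeasurableSpace.comap (fun ω => (X ω, U ω)) inferInstance
      ≤ MeasurableSpace.comap (fun ω => (X ω, (U ω, Mstar ω))) inferInstance :=
    ((measurable_fst.prodMk (measurable_fst.comp measurable_snd)).comp
      (comap_measurable (fun ω => (X ω, (U ω, Mstar ω))))).comap_le
  have hMstar_meas : StronglyMeasurable[MeasurableSpace.comap
      (fun ω => (X ω, (U ω, Mstar ω))) inferInstance] Mstar :=
    ((measurable_snd.comp measurable_snd).comp (comap_measurable _)).stronglyMeasurable
  rw [hA] at hpos
  rw [hM]
  exact integral_eq_integral_condExp_cond_indicator h_le₁ h_le₂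
    (hX.prodMk (hU.prodMk hMstar)).comap_le hs hMstar_meas hint
    (condExp_indicator_comap_prodMk_ae_eq_of_condIndepFun hX (hU.prodMk hMstar) hAmeas hMAR
      (measurableSet_singleton 1)) hpos
end

section
/- Under the setup of the MAR-S efficient influence function with constant annotation score π(X) = π ∈ (0,1], the variance of the influence function satisfies Var(φ) = Var(M̃*)·(1 + (1/π − 1)·(1 − R²(X̃))), where R²(X̃) = 1 − E[Var(M̃*|X̃)]/Var(M̃*). -/
open MeasureTheory ProbabilityTheory

/-!
Since `A` is binary with `P(A = 1 | X̃) = π` constant and `A ⊥ M̃* | X̃`, the annotated subpopulation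
`{A = 1}` sees the pair `(M̃*, μ̃(X̃))` with `π` times the law it has under `P`: the two pushforward
measures agree on rectangles `u × v`, by conditional independence, and hence everywhere. So
`E[A G(M̃*, μ̃)] = π E[G(M̃*, μ̃)]`. Writing `φ = (μ̃ - θ) + A (M̃* - μ̃) / π` and using `A² = A`, this gives
`E φ = 0` and `E φ² = Var μ̃ + 2 E[(μ̃ - θ)(M̃* - μ̃)] + E[(M̃* - μ̃)²] / π`, whose middle term vanishes
because `M̃* - μ̃` is orthogonal to `X̃`-measurable functions. Hence
`Var φ = Var μ̃ + E[Var(M̃* | X̃)] / π`, and the law of total variance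
`Var M̃* = Var μ̃ + E[Var(M̃* | X̃)]` turns this into the stated formula.
-/

lemma indicator_preimage_one_eq_self {Ω : Type*} {A : Ω → ℝ}
    (hbin : ∀ ω, A ω = 0 ∨ A ω = 1) :
    (A ⁻¹' {1}).indicator (fun _ => (1 : ℝ)) = A := by
  funext ω
  rcases hbin ω with h | h <;> simp [Set.indicator, h]

lemma MeasureTheory.Integrable.mul_of_binary {Ω : Type*} {mΩ : MeasurableSpace Ω}
    {P : Measure Ω} {A g : Ω → ℝ} (hg : Integrable g P) (hA : AEStronglyMeasurable A P)
    (hbin : ∀ ω, A ω = 0 ∨ A ω = 1) :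
    Integrable (fun ω => A ω * g ω) P :=
  hg.bdd_mul (c := 1) hA (ae_of_all _ fun ω => by rcases hbin ω with h | h <;> simp [h])

lemma setIntegral_condExp_indicator_one {Ω : Type*} {m mΩ : MeasurableSpace Ω} {P : Measure Ω}
    [IsFiniteMeasure P] (hm : m ≤ mΩ) {t B : Set Ω} (ht : MeasurableSet t)
    (hB : MeasurableSet[m] B) :
    ∫ ω in B, (P⟦t | m⟧) ω ∂P = P.real (t ∩ B) := by
  rw [setIntegral_condExp hm ((integrable_const 1).indicator ht) hB, setIntegral_indicator ht,
    setIntegral_const, smul_eq_mul, mul_one, Set.inter_comm]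

lemma integral_mul_sub_condExp_eq_zero {Ω : Type*} {m mΩ : MeasurableSpace Ω} {P : Measure Ω}
    [IsFiniteMeasure P] (hm : m ≤ mΩ) {k f : Ω → ℝ} (hk : StronglyMeasurable[m] k)
    (hk2 : MemLp k 2 P) (hf : MemLp f 2 P) :
    ∫ ω, k ω * (f ω - (P[f | m]) ω) ∂P = 0 := by
  have hkf : Integrable (k * f) P := hk2.integrable_mul hf
  have hkμ : Integrable (k * P[f | m]) P := hk2.integrable_mul (hf.condExp one_le_two)
  calc ∫ ω, k ω * (f ω - (P[f | m]) ω) ∂P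
      = ∫ ω, (P[k * f | m]) ω ∂P - ∫ ω, (k * P[f | m]) ω ∂P := by
        simp_rw [mul_sub]
        rw [integral_condExp hm]
        exact integral_sub hkf hkμ
    _ = 0 := by
        rw [integral_congr_ae (condExp_mul_of_stronglyMeasurable_left hk hkf
          (hf.integrable one_le_two)), sub_self]

/-- The influence function `φ`, written with `M̃*` in place of `M̃ = A M̃*`; for binary `A` this
changes nothing, since `A (A M̃* - μ̃) = A (M̃* - μ̃)`. -/
noncomputable def ipwInfluence {Ω : Type*} [MeasurableSpace Ω] (P : Measure Ω)
    (m : MeasurableSpace Ω) (M A : Ω → ℝ) (π : ℝ) : Ω → ℝ :=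
  fun ω => (P[M | m]) ω + A ω / π * (M ω - (P[M | m]) ω) - ∫ ω, M ω ∂P

section CondIndep

variable {Ω β γ : Type*} {m : MeasurableSpace Ω} [mΩ : MeasurableSpace Ω] [StandardBorelSpace Ω]
  {hm : m ≤ mΩ} {P : Measure Ω} [IsProbabilityMeasure P]
  [MeasurableSpace β] [MeasurableSpace γ] {X : Ω → β} {A : Ω → ℝ} {π : ℝ}

lemma measureReal_inter_preimage_one_inter (hX : Measurable X) (hA : Measurable A)
    (hbin : ∀ ω, A ω = 0 ∨ A ω = 1) (hXA : CondIndepFun m hm X A P)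
    (hπ : (fun _ => π) =ᵐ[P] P[A | m]) {u : Set β} (hu : MeasurableSet u) {B : Set Ω}
    (hB : MeasurableSet[m] B) :
    P.real (X ⁻¹' u ∩ A ⁻¹' {1} ∩ B) = π * P.real (X ⁻¹' u ∩ B) := by
  have hs : P⟦A ⁻¹' {1} | m⟧ =ᵐ[P] fun _ => π := by
    rw [indicator_preimage_one_eq_self hbin]
    exact hπ.symm
  have hprod := (condIndepFun_iff_condExp_inter_preimage_eq_mul hX hA).1 hXA u {1} hu
    (measurableSet_singleton 1)
  rw [← setIntegral_condExp_indicator_one hm ((hX hu).inter (hA (measurableSet_singleton 1))) hB,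
    ← setIntegral_condExp_indicator_one hm (hX hu) hB, ← integral_const_mul]
  refine setIntegral_congr_ae (hm B hB) ?_
  filter_upwards [hprod, hs] with ω hprodω hsω _
  rw [hprodω, hsω, mul_comm]

lemma map_prodMk_restrict_preimage_one (hX : Measurable X) (hA : Measurable A)
    (hbin : ∀ ω, A ω = 0 ∨ A ω = 1) (hXA : CondIndepFun m hm X A P)
    (hπ : (fun _ => π) =ᵐ[P] P[A | m]) (hπ0 : 0 ≤ π) {Y : Ω → γ} (hY : Measurable[m] Y) :
    (P.restrict (A ⁻¹' {1})).map (fun ω => (X ω, Y ω))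
      = ENNReal.ofReal π • P.map (fun ω => (X ω, Y ω)) := by
  have hXY : Measurable fun ω => (X ω, Y ω) := hX.prodMk (hY.mono hm le_rfl)
  have hrect : ∀ u v, MeasurableSet u → MeasurableSet v →
      (P.restrict (A ⁻¹' {1})).map (fun ω => (X ω, Y ω)) (u ×ˢ v)
        = (ENNReal.ofReal π • P.map (fun ω => (X ω, Y ω))) (u ×ˢ v) := by
    intro u v hu hv
    rw [Measure.map_apply hXY (hu.prod hv), Measure.smul_apply, Measure.map_apply hXY (hu.prod hv),
      Measure.restrict_apply (hXY (hu.prod hv)), Set.mk_preimage_prod, smul_eq_mul,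
      ← ofReal_measureReal, ← ofReal_measureReal, ← ENNReal.ofReal_mul hπ0,
      ← measureReal_inter_preimage_one_inter hX hA hbin hXA hπ hu (hY hv)]
    congr 2
    rw [Set.inter_assoc, Set.inter_comm (Y ⁻¹' v), ← Set.inter_assoc]
  refine ext_of_generate_finite _ generateFrom_prod.symm isPiSystem_prod ?_ ?_
  · rintro _ ⟨u, hu, v, hv, rfl⟩
    exact hrect u v hu hv
  · rw [← Set.univ_prod_univ]
    exact hrect _ _ .univ .univ

lemma integral_mul_comp_prodMk (hX : Measurable X) (hA : Measurable A)
    (hbin : ∀ ω, A ω = 0 ∨ A ω = 1) (hXA : CondIndepFun m hm X A P)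
    (hπ : (fun _ => π) =ᵐ[P] P[A | m]) (hπ0 : 0 ≤ π) {Y : Ω → γ} (hY : Measurable[m] Y)
    {G : β × γ → ℝ} (hG : Measurable G) :
    ∫ ω, A ω * G (X ω, Y ω) ∂P = π * ∫ ω, G (X ω, Y ω) ∂P := by
  have hXY : Measurable fun ω => (X ω, Y ω) := hX.prodMk (hY.mono hm le_rfl)
  have hs : MeasurableSet (A ⁻¹' {1}) := hA (measurableSet_singleton 1)
  calc ∫ ω, A ω * G (X ω, Y ω) ∂P = ∫ ω in A ⁻¹' {1}, G (X ω, Y ω) ∂P := by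
        rw [← integral_indicator hs]
        congr with ω
        rcases hbin ω with h | h <;> simp [Set.indicator, h]
    _ = ∫ z, G z ∂(P.restrict (A ⁻¹' {1})).map (fun ω => (X ω, Y ω)) :=
        (integral_map hXY.aemeasurable hG.aestronglyMeasurable).symm
    _ = π * ∫ z, G z ∂P.map (fun ω => (X ω, Y ω)) := by
        rw [map_prodMk_restrict_preimage_one hX hA hbin hXA hπ hπ0 hY, integral_smul_measure,
          ENNReal.toReal_ofReal hπ0, smul_eq_mul]
    _ = π * ∫ ω, G (X ω, Y ω) ∂P := by
        rw [integral_map hXY.aemeasurable hG.aestronglyMeasurable]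

lemma integral_ipwInfluence {M : Ω → ℝ} (hM : Measurable M) (hM2 : MemLp M 2 P)
    (hA : Measurable A) (hbin : ∀ ω, A ω = 0 ∨ A ω = 1) (hMA : CondIndepFun m hm M A P)
    (hπ : (fun _ => π) =ᵐ[P] P[A | m]) (hπpos : 0 < π) :
    ∫ ω, ipwInfluence P m M A π ω ∂P = 0 := by
  set μ := P[M | m]
  have hμ2 : MemLp μ 2 P := hM2.condExp one_le_two
  have hU : Integrable (fun ω => μ ω - ∫ ω, M ω ∂P) P :=
    (hμ2.integrable one_le_two).sub (integrable_const _)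
  have hD : Integrable (fun ω => M ω - μ ω) P := (hM2.sub hμ2).integrable one_le_two
  have hAD : ∫ ω, A ω * (M ω - μ ω) ∂P = π * ∫ ω, (M ω - μ ω) ∂P :=
    integral_mul_comp_prodMk hM hA hbin hMA hπ hπpos.le stronglyMeasurable_condExp.measurable
      (G := fun z => z.1 - z.2) (by fun_prop)
  have hφ : ∀ ω, ipwInfluence P m M A π ω = (μ ω - ∫ ω, M ω ∂P) + A ω * (M ω - μ ω) / π := by
    intro ω
    simp only [ipwInfluence, μ]
    ring
  simp_rw [hφ]
  rw [integral_add hU ((hD.mul_of_binary hA.aestronglyMeasurable hbin).div_const π),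
    integral_div, hAD, integral_sub (hμ2.integrable one_le_two) (integrable_const _),
    integral_sub (hM2.integrable one_le_two) (hμ2.integrable one_le_two), integral_condExp hm]
  simp

lemma integral_ipwInfluence_sq {M : Ω → ℝ} (hM : Measurable M) (hM2 : MemLp M 2 P)
    (hA : Measurable A) (hbin : ∀ ω, A ω = 0 ∨ A ω = 1) (hMA : CondIndepFun m hm M A P)
    (hπ : (fun _ => π) =ᵐ[P] P[A | m]) (hπpos : 0 < π) :
    ∫ ω, ipwInfluence P m M A π ω ^ 2 ∂P
      = Var[P[M | m]; P] + (∫ ω, (Var[M; P | m]) ω ∂P) / π := by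
  set μ := P[M | m]
  set θ := ∫ ω, M ω ∂P
  have hμ2 : MemLp μ 2 P := hM2.condExp one_le_two
  have hμm : StronglyMeasurable[m] μ := stronglyMeasurable_condExp
  have hU2 : MemLp (fun ω => μ ω - θ) 2 P := hμ2.sub (memLp_const θ)
  have hD2 : MemLp (fun ω => M ω - μ ω) 2 P := hM2.sub hμ2
  have hUD : Integrable (fun ω => (μ ω - θ) * (M ω - μ ω)) P := hU2.integrable_mul hD2
  have hUD0 : ∫ ω, (μ ω - θ) * (M ω - μ ω) ∂P = 0 :=
    integral_mul_sub_condExp_eq_zero hm (hμm.sub stronglyMeasurable_const) hU2 hM2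
  set G : ℝ × ℝ → ℝ := fun z => 2 / π * ((z.2 - θ) * (z.1 - z.2)) + (z.1 - z.2) ^ 2 / π ^ 2
  have hG : Integrable (fun ω => G (M ω, μ ω)) P :=
    (hUD.const_mul _).add (hD2.integrable_sq.div_const _)
  have hAG : ∫ ω, A ω * G (M ω, μ ω) ∂P = π * ∫ ω, G (M ω, μ ω) ∂P :=
    integral_mul_comp_prodMk hM hA hbin hMA hπ hπpos.le hμm.measurable (by fun_prop)
  -- `A ^ 2 = A` turns the square of the weighted residual into `A` times a function of `(M, μ)`
  have hsq : ∀ ω, ipwInfluence P m M A π ω ^ 2 = (μ ω - θ) ^ 2 + A ω * G (M ω, μ ω) := by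
    intro ω
    rcases hbin ω with h | h <;> simp only [ipwInfluence, G, h] <;> ring
  have hE : ∫ ω, (Var[M; P | m]) ω ∂P = ∫ ω, (M ω - μ ω) ^ 2 ∂P := integral_condExp hm
  have hVμ : Var[μ; P] = ∫ ω, (μ ω - θ) ^ 2 ∂P := by
    rw [variance_eq_integral (hμm.mono hm).measurable.aemeasurable, integral_condExp hm]
  simp_rw [hsq]
  rw [integral_add hU2.integrable_sq (hG.mul_of_binary hA.aestronglyMeasurable hbin), ← hVμ, hAG,
    integral_add (hUD.const_mul _) (hD2.integrable_sq.div_const _), integral_const_mul,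
    integral_div, hUD0, hE]
  field_simp
  ring

lemma variance_ipwInfluence {M : Ω → ℝ} (hM : Measurable M) (hM2 : MemLp M 2 P)
    (hA : Measurable A) (hbin : ∀ ω, A ω = 0 ∨ A ω = 1) (hMA : CondIndepFun m hm M A P)
    (hπ : (fun _ => π) =ᵐ[P] P[A | m]) (hπpos : 0 < π) :
    Var[ipwInfluence P m M A π; P] = Var[P[M | m]; P] + (∫ ω, (Var[M; P | m]) ω ∂P) / π := by
  have hmeas : AEMeasurable (ipwInfluence P m M A π) P := by
    have hμ : Measurable (P[M | m]) := (stronglyMeasurable_condExp.mono hm).measurable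
    unfold ipwInfluence
    fun_prop
  rw [variance_eq_integral hmeas, integral_ipwInfluence hM hM2 hA hbin hMA hπ hπpos]
  simp_rw [sub_zero]
  exact integral_ipwInfluence_sq hM hM2 hA hbin hMA hπ hπpos

end CondIndep

theorem stmt3_general {Ω 𝒳t : Type*} [MeasurableSpace Ω] [StandardBorelSpace Ω]
    [MeasurableSpace 𝒳t]
    (P : Measure Ω) [IsProbabilityMeasure P]
    (Mstar Mt A : Ω → ℝ) (Xt : Ω → 𝒳t)
    (hMstar : Measurable Mstar) (hAmeas : Measurable A) (hXt : Measurable Xt)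
    (hL2 : MemLp Mstar 2 P)
    (hVarpos : 0 < variance Mstar P)
    (hbin : ∀ ω, A ω = 0 ∨ A ω = 1)
    (hcons : ∀ ω, Mt ω = A ω * Mstar ω)
    (hMAR : CondIndepFun (MeasurableSpace.comap Xt inferInstance) hXt.comap_le Mstar A P)
    (π : ℝ) (hπpos : 0 < π)
    -- constant annotation score: P(A=1|X̃) = π
    (hπdef : (fun _ => π) =ᵐ[P] P[A | MeasurableSpace.comap Xt inferInstance]) :
    let μt := P[Mstar | MeasurableSpace.comap Xt inferInstance]
    let θ : ℝ := ∫ ω, Mstar ω ∂P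
    let φ : Ω → ℝ := fun ω => μt ω + (A ω / π) * (Mt ω - μt ω) - θ
    let R2 : ℝ := 1 - (∫ ω, (P[fun ω' => (Mstar ω' - μt ω') ^ 2 |
        MeasurableSpace.comap Xt inferInstance]) ω ∂P) / variance Mstar P
    variance φ P = variance Mstar P * (1 + (1 / π - 1) * (1 - R2)) := by
  intro μt θ φ R2
  have hφ : φ = ipwInfluence P (MeasurableSpace.comap Xt inferInstance) Mstar A π := by
    funext ω
    rcases hbin ω with h | h <;> simp only [φ, ipwInfluence, hcons, h, μt, θ] <;> ring
  have hR2 : R2 = 1 - (∫ ω, (Var[Mstar; P | MeasurableSpace.comap Xt inferInstance]) ω ∂P)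
      / variance Mstar P := rfl
  have htotal := integral_condVar_add_variance_condExp hXt.comap_le hL2
  rw [hφ, variance_ipwInfluence hMstar hL2 hAmeas hbin hMAR hπdef hπpos, hR2,
    ← htotal]
  rw [← htotal] at hVarpos
  field_simp
  ring

/-- With a constant annotation score `π ∈ (0,1]`, the MAR-S influence
function satisfies `Var(φ) = Var(M̃*)·(1 + (1/π − 1)·(1 − R²(X̃)))`, where
`R²(X̃) = 1 − E[Var(M̃*|X̃)]/Var(M̃*)` is the nonparametric R-squared. -/
theorem stmt3 {Ω 𝒳t : Type*} [MeasurableSpace Ω] [StandardBorelSpace Ω]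
    [MeasurableSpace 𝒳t]
    (P : Measure Ω) [IsProbabilityMeasure P]
    (Mstar Mt A : Ω → ℝ) (Xt : Ω → 𝒳t)
    (hMstar : Measurable Mstar) (hAmeas : Measurable A) (hXt : Measurable Xt)
    (hL2 : MemLp Mstar 2 P)
    (hVarpos : 0 < variance Mstar P)
    (hbin : ∀ ω, A ω = 0 ∨ A ω = 1)
    (hcons : ∀ ω, Mt ω = A ω * Mstar ω)
    (hMAR : CondIndepFun (MeasurableSpace.comap Xt inferInstance) hXt.comap_le Mstar A P)
    (π : ℝ) (hπpos : 0 < π) (hπle : π ≤ 1)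
    -- constant annotation score: P(A=1|X̃) = π
    (hπdef : (fun _ => π) =ᵐ[P] P[A | MeasurableSpace.comap Xt inferInstance]) :
    let μt := P[Mstar | MeasurableSpace.comap Xt inferInstance]
    let θ : ℝ := ∫ ω, Mstar ω ∂P
    let φ : Ω → ℝ := fun ω => μt ω + (A ω / π) * (Mt ω - μt ω) - θ
    let R2 : ℝ := 1 - (∫ ω, (P[fun ω' => (Mstar ω' - μt ω') ^ 2 |
        MeasurableSpace.comap Xt inferInstance]) ω ∂P) / variance Mstar P
    variance φ P = variance Mstar P * (1 + (1 / π - 1) * (1 - R2)) :=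
  stmt3_general P Mstar Mt A Xt hMstar hAmeas hXt hL2 hVarpos hbin hcons hMAR π hπpos hπdef
end
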